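/- arXiv:1401.4856 — 9 statements merged into one kernel-verified Lean document; each statement's English description precedes it below -/
import Mathlib

section
/- If g : K → (−∞, +∞] is K-inf-compact, then the function x ↦ inf_{a ∈ A(x)} g(x,a) is lower semicontinuous on S. -/
/-!
Suppose the infimum `v x = inf_{a ∈ A(x)} g(x,a)` were not lower semicontinuous at `x`: then there
are `x_n → x` and a real `M < v x` with `v x_n < M`, hence `a_n ∈ A(x_n)` with `g(x_n,a_n) < M`.
Inf-compactness gives a subsequence `a_{φ n} → a ∈ A(x)`, and lower semicontinuity of `g` on the
graph gives `g(x,a) ≤ M < v x`, a contradiction.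
-/

open Filter Topology

/-- `f` is `K`-inf-compact on the graph `K = {(x,a) : x ∈ S, a ∈ A(x)}` of the
multifunction `As`. -/
def KInfCompact {S A : Type*} [MetricSpace S] [MetricSpace A]
    (As : S → Set A) (f : S × A → EReal) : Prop :=
  LowerSemicontinuousOn f {p : S × A | p.2 ∈ As p.1} ∧
    ∀ (xs : ℕ → S) (as : ℕ → A) (x : S),
      Tendsto xs atTop (𝓝 x) → (∀ n, as n ∈ As (xs n)) →
      (∃ M : ℝ, ∀ n, f (xs n, as n) ≤ (M : EReal)) →
      ∃ a ∈ As x, ∃ φ : ℕ → ℕ, StrictMono φ ∧ Tendsto (as ∘ φ) atTop (𝓝 a)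

theorem LowerSemicontinuousWithinAt.le_of_tendsto {X α β : Type*} [TopologicalSpace X]
    [LinearOrder β] {f : X → β} {s : Set X} {x : X} (hf : LowerSemicontinuousWithinAt f s x)
    {l : Filter α} [l.NeBot] {u : α → X} (hu : Tendsto u l (𝓝[s] x)) {M : β}
    (hM : ∀ᶠ n in l, f (u n) ≤ M) : f x ≤ M := by
  by_contra! hMx
  obtain ⟨n, hn, hn'⟩ := ((hu.eventually (hf M hMx)).and hM).exists
  exact hn.not_ge hn'

theorem lowerSemicontinuous_of_seq_lt {X : Type*} [TopologicalSpace X] [FirstCountableTopology X]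
    {f : X → EReal}
    (h : ∀ (x : X) (xs : ℕ → X) (M : ℝ), Tendsto xs atTop (𝓝 x) → (∀ n, f (xs n) < M) → f x ≤ M) :
    LowerSemicontinuous f := by
  intro x y hy
  by_contra hfreq
  obtain ⟨xs, hxs, hxsy⟩ := exists_seq_forall_of_frequently (not_eventually.1 hfreq)
  obtain ⟨M, hyM, hMx⟩ := EReal.exists_between_coe_real hy
  have hle := h x xs M hxs fun n => (not_lt.1 (hxsy n)).trans_lt hyM
  exact hle.not_gt hMx

theorem KInfCompact.exists_le_of_tendsto {S A : Type*} [MetricSpace S] [MetricSpace A]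
    {As : S → Set A} {g : S × A → EReal} (hg : KInfCompact As g) {xs : ℕ → S} {x : S}
    (hxs : Tendsto xs atTop (𝓝 x)) {as : ℕ → A} (has : ∀ n, as n ∈ As (xs n)) {M : ℝ}
    (hM : ∀ n, g (xs n, as n) ≤ M) : ∃ a ∈ As x, g (x, a) ≤ M := by
  obtain ⟨a, ha, φ, hφ, hasφ⟩ := hg.2 xs as x hxs has ⟨M, hM⟩
  have hpair : Tendsto (fun n => (xs (φ n), as (φ n))) atTop
      (𝓝[{p : S × A | p.2 ∈ As p.1}] (x, a)) :=
    tendsto_nhdsWithin_of_tendsto_nhds_of_eventually_within _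
      ((hxs.comp hφ.tendsto_atTop).prodMk_nhds hasφ) (Eventually.of_forall fun n => has (φ n))
  exact ⟨a, ha, LowerSemicontinuousWithinAt.le_of_tendsto (hg.1 (x, a) ha) hpair
    (Eventually.of_forall fun n => hM (φ n))⟩

theorem stmt2_general {S A : Type*} [MetricSpace S] [MetricSpace A] (As : S → Set A)
    (g : S × A → EReal)
    (hg : KInfCompact As g) :
    LowerSemicontinuous (fun x => ⨅ a ∈ As x, g (x, a)) := by
  refine lowerSemicontinuous_of_seq_lt fun x xs M hxs hlt => ?_
  have hpick : ∀ n, ∃ a ∈ As (xs n), g (xs n, a) < M := fun n => by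
    simpa only [iInf_lt_iff, exists_prop] using hlt n
  choose as has hasM using hpick
  obtain ⟨a, ha, haM⟩ := hg.exists_le_of_tendsto hxs has fun n => (hasM n).le
  exact (biInf_le _ ha).trans haM

/-- If `g : K → (−∞, +∞]` is `K`-inf-compact, then `x ↦ inf_{a ∈ A(x)} g (x,a)` is
lower semicontinuous on `S`. -/
theorem stmt2 {S A : Type*} [MetricSpace S] [MetricSpace A] (As : S → Set A)
    (hAs : ∀ x, (As x).Nonempty)
    (g : S × A → EReal)
    (hgbot : ∀ p : S × A, p.2 ∈ As p.1 → g p ≠ ⊥)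
    (hg : KInfCompact As g) :
    LowerSemicontinuous (fun x => ⨅ a ∈ As x, g (x, a)) :=
  stmt2_general As g hg
end

section
/- Let (S, ρ) be a metric space and suppose a sequence (Q_n) of Borel probability measures on S converges weakly to a Borel probability measure Q. Let g_n : S → [0, +∞] be Borel measurable for every n, and define g(y) := liminf_{n→∞, x→y} g_n(x) for y ∈ S (this function g is lower semicontinuous, hence Borel measurable). Then ∫_S g dQ ≤ liminf_{n→∞} ∫_S g_n dQ_n, where all integrals are Lebesgue integrals with values in [0, +∞]. -/
/-!
Write `G_N(y) = sup_{Δ>0} inf { g_n(x) : n ≥ N, dist x y < Δ }` (`lowerLimitFrom g N y`), so that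
the integrand is the increasing limit of the `G_N`, and `G_N ≤ g_n` for `n ≥ N`. By monotone
convergence it suffices to show `∫ G_N dQ ≤ liminf ∫ G_N dQ_n`. Each `G_N` is lower semicontinuous,
so its superlevel sets are open; integrating the portmanteau inequality `Q(U) ≤ liminf Q_n(U)` for
open `U` over the levels (layer-cake formula) and applying Fatou's lemma in the level variable
gives the claim.
-/

open Filter Topology MeasureTheory ENNReal Set

section Portmanteau

variable {Ω : Type*} [TopologicalSpace Ω] [MeasurableSpace Ω] [OpensMeasurableSpace Ω]
  {μ : Measure Ω} {μs : ℕ → Measure Ω}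

lemma lintegral_ofReal_le_liminf_lintegral_of_lowerSemicontinuous {f : Ω → ℝ}
    (hf : LowerSemicontinuous f) (f_nn : 0 ≤ f)
    (h_opens : ∀ G, IsOpen G → μ G ≤ atTop.liminf fun i ↦ μs i G) :
    ∫⁻ x, ENNReal.ofReal (f x) ∂μ ≤ atTop.liminf fun i ↦ ∫⁻ x, ENNReal.ofReal (f x) ∂(μs i) := by
  simp_rw [lintegral_eq_lintegral_meas_lt _ (Eventually.of_forall f_nn) hf.measurable.aemeasurable]
  calc ∫⁻ t in Ioi 0, μ {a | t < f a}
      ≤ ∫⁻ t in Ioi 0, atTop.liminf fun i ↦ μs i {a | t < f a} :=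
        lintegral_mono fun t ↦ h_opens _ (hf.isOpen_preimage t)
    _ ≤ atTop.liminf fun i ↦ ∫⁻ t in Ioi 0, μs i {a | t < f a} :=
        lintegral_liminf_le fun i ↦ Antitone.measurable fun s t hst ↦
          measure_mono fun _ hω ↦ hst.trans_lt hω

lemma lintegral_le_liminf_lintegral_of_lowerSemicontinuous {f : Ω → ℝ≥0∞}
    (hf : LowerSemicontinuous f)
    (h_opens : ∀ G, IsOpen G → μ G ≤ atTop.liminf fun i ↦ μs i G) :
    ∫⁻ x, f x ∂μ ≤ atTop.liminf fun i ↦ ∫⁻ x, f x ∂(μs i) := by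
  -- The layer-cake formula is for real functions, so truncate `f` at the levels `M : ℕ`.
  have ofReal_truncate (M : ℕ) (x : Ω) :
      ENNReal.ofReal (truncateToReal M (f x)) = min (M : ℝ≥0∞) (f x) :=
    ofReal_toReal (ne_top_of_le_ne_top (natCast_ne_top M) (min_le_left _ _))
  have truncated (M : ℕ) :
      ∫⁻ x, min (M : ℝ≥0∞) (f x) ∂μ ≤ atTop.liminf fun i ↦ ∫⁻ x, f x ∂(μs i) := by
    have hM : LowerSemicontinuous fun x ↦ truncateToReal M (f x) :=
      (continuous_truncateToReal (natCast_ne_top M)).comp_lowerSemicontinuous hf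
        (monotone_truncateToReal (natCast_ne_top M))
    have := lintegral_ofReal_le_liminf_lintegral_of_lowerSemicontinuous hM
      (fun _ ↦ truncateToReal_nonneg) h_opens
    simp only [ofReal_truncate] at this
    exact this.trans <| liminf_le_liminf (.of_forall fun i ↦ lintegral_mono fun x ↦
      min_le_right _ _)
  calc ∫⁻ x, f x ∂μ = ∫⁻ x, ⨆ M : ℕ, min (M : ℝ≥0∞) (f x) ∂μ := by
        simp_rw [← iSup_inf_eq, iSup_natCast, top_inf_eq]
    _ = ⨆ M : ℕ, ∫⁻ x, min (M : ℝ≥0∞) (f x) ∂μ :=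
        lintegral_iSup (fun M ↦ measurable_const.min hf.measurable)
          fun M M' h x ↦ min_le_min_right _ (Nat.cast_le.mpr h)
    _ ≤ _ := iSup_le truncated

end Portmanteau

section LowerLimitFrom

variable {ι S : Type*} [Preorder ι] [PseudoMetricSpace S]

noncomputable def lowerLimitFrom (g : ι → S → ℝ≥0∞) (N : ι) (y : S) : ℝ≥0∞ :=
  ⨆ (Δ : ℝ) (_ : 0 < Δ), ⨅ (n : ι) (_ : N ≤ n) (x : S) (_ : dist x y < Δ), g n x

variable {g : ι → S → ℝ≥0∞}

lemma lowerLimitFrom_le {N n : ι} (hn : N ≤ n) (y : S) : lowerLimitFrom g N y ≤ g n y :=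
  iSup₂_le fun _ hΔ ↦ iInf₂_le_of_le n hn <| iInf₂_le y (by simpa using hΔ)

lemma monotone_lowerLimitFrom : Monotone (lowerLimitFrom g) := fun _ _ hNM _ ↦
  iSup₂_mono fun _ _ ↦ le_iInf₂ fun n hn ↦ iInf₂_le n (hNM.trans hn)

lemma lowerSemicontinuous_lowerLimitFrom (N : ι) : LowerSemicontinuous (lowerLimitFrom g N) := by
  intro y t ht
  obtain ⟨Δ, hΔ, ht⟩ : ∃ Δ : ℝ, 0 < Δ ∧
      t < ⨅ (n : ι) (_ : N ≤ n) (x : S) (_ : dist x y < Δ), g n x := by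
    simpa only [lowerLimitFrom, lt_iSup_iff, exists_prop] using ht
  filter_upwards [Metric.ball_mem_nhds y (half_pos hΔ)] with z hz
  refine lt_of_lt_of_le ht <| le_iSup₂_of_le (Δ / 2) (half_pos hΔ) <|
    iInf₂_mono fun n _ ↦ iInf₂_mono' fun x hx ↦ ⟨x, ?_, le_rfl⟩
  calc dist x y ≤ dist x z + dist z y := dist_triangle x z y
    _ < Δ / 2 + Δ / 2 := add_lt_add hx hz
    _ = Δ := add_halves Δ

end LowerLimitFrom

lemma le_liminf_measure_open_of_forall_integral_tendsto {Ω : Type*} [TopologicalSpace Ω]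
    [MeasurableSpace Ω] [OpensMeasurableSpace Ω] [HasOuterApproxClosed Ω]
    {μ : Measure Ω} {μs : ℕ → Measure Ω} [IsProbabilityMeasure μ]
    [∀ i, IsProbabilityMeasure (μs i)]
    (h : ∀ f : BoundedContinuousFunction Ω ℝ,
      Tendsto (fun i ↦ ∫ x, f x ∂(μs i)) atTop (𝓝 (∫ x, f x ∂μ)))
    {G : Set Ω} (hG : IsOpen G) :
    μ G ≤ atTop.liminf fun i ↦ μs i G :=
  ProbabilityMeasure.le_liminf_measure_open_of_tendsto (μ := ⟨μ, ‹_›⟩)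
    (μs := fun i ↦ ⟨μs i, inferInstance⟩)
    (ProbabilityMeasure.tendsto_iff_forall_integral_tendsto.mpr h) hG

theorem stmt4_general {S : Type*} [MetricSpace S] [MeasurableSpace S] [BorelSpace S]
    (Q : ℕ → Measure S) (Qlim : Measure S)
    (hQ : ∀ n, IsProbabilityMeasure (Q n)) (hQlim : IsProbabilityMeasure Qlim)
    (hweak : ∀ f : BoundedContinuousFunction S ℝ,
      Tendsto (fun n => ∫ x, f x ∂(Q n)) atTop (𝓝 (∫ x, f x ∂Qlim))) (g : ℕ → S → ℝ≥0∞) :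
    ∫⁻ y, (⨆ (N : ℕ) (Δ : ℝ) (_ : 0 < Δ),
        ⨅ (n : ℕ) (_ : N ≤ n) (x : S) (_ : dist x y < Δ), g n x) ∂Qlim
      ≤ liminf (fun n => ∫⁻ x, g n x ∂(Q n)) atTop := by
  have h_opens (G : Set S) (hG : IsOpen G) : Qlim G ≤ atTop.liminf fun i ↦ Q i G :=
    le_liminf_measure_open_of_forall_integral_tendsto hweak hG
  calc ∫⁻ y, ⨆ N, lowerLimitFrom g N y ∂Qlim
      = ⨆ N, ∫⁻ y, lowerLimitFrom g N y ∂Qlim :=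
        lintegral_iSup (fun N ↦ (lowerSemicontinuous_lowerLimitFrom N).measurable)
          monotone_lowerLimitFrom
    _ ≤ atTop.liminf fun n ↦ ∫⁻ x, g n x ∂(Q n) := iSup_le fun N ↦
        (lintegral_le_liminf_lintegral_of_lowerSemicontinuous
          (lowerSemicontinuous_lowerLimitFrom N) h_opens).trans <|
        liminf_le_liminf <| eventually_atTop.mpr
          ⟨N, fun _ hn ↦ lintegral_mono (lowerLimitFrom_le hn)⟩

/-- Generalized Fatou's lemma: if Borel probability measures `Qₙ` on a metric space `S`
converge weakly to `Q` and `gₙ : S → [0, +∞]` are Borel measurable, then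
`∫_S (liminf_{n→∞, x→y} gₙ(x)) Q(dy) ≤ liminf_n ∫_S gₙ dQₙ`, where
`liminf_{n→∞, x→y} gₙ(x) := sup_{N∈ℕ, Δ>0} inf { gₙ(x) : n ≥ N, dist x y < Δ }`. -/
theorem stmt4 {S : Type*} [MetricSpace S] [MeasurableSpace S] [BorelSpace S]
    (Q : ℕ → Measure S) (Qlim : Measure S)
    (hQ : ∀ n, IsProbabilityMeasure (Q n)) (hQlim : IsProbabilityMeasure Qlim)
    (hweak : ∀ f : BoundedContinuousFunction S ℝ,
      Tendsto (fun n => ∫ x, f x ∂(Q n)) atTop (𝓝 (∫ x, f x ∂Qlim)))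
    (g : ℕ → S → ℝ≥0∞) (hg : ∀ n, Measurable (g n)) :
    ∫⁻ y, (⨆ (N : ℕ) (Δ : ℝ) (_ : 0 < Δ),
        ⨅ (n : ℕ) (_ : N ≤ n) (x : S) (_ : dist x y < Δ), g n x) ∂Qlim
      ≤ liminf (fun n => ∫⁻ x, g n x ∂(Q n)) atTop :=
  stmt4_general Q Qlim hQ hQlim hweak g
end

section
/- If u : S → [0, +∞] is Borel measurable and satisfies u(x) = (T̃u)(x) for every x ∈ S, then u(x) = (Tu)(x) for every x ∈ S. -/
/-!
Write `B/D` for a term of `T̃u` at `x` and `r := w(x) − q_x(a)` for the fictitious self-loop rate,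
so that the corresponding term of `Tu` is the mediant `(B + r·u(x)) / (D + r)`. Whenever
`u(x) ≤ B/D`, this mediant lies between `u(x)` and `B/D`; since `u(x) = inf B/D` is below every
term, taking infima over `a` squeezes `Tu(x)` to `u(x)`.
-/

open MeasureTheory ENNReal

namespace ENNReal

variable {t B D r : ℝ≥0∞}

theorem le_add_mul_div_add_of_le_div (hD0 : D ≠ 0) (hDr : D + r ≠ ∞) (ht : t ≤ B / D) :
    t ≤ (B + r * t) / (D + r) := by
  rw [ENNReal.le_div_iff_mul_le (Or.inl (by simp [hD0])) (Or.inl hDr), mul_add, mul_comm t r]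
  gcongr
  exact ENNReal.mul_le_of_le_div ht

theorem add_mul_div_add_le_div_of_le_div (hD0 : D ≠ 0) (hDr : D + r ≠ ∞) (ht : t ≤ B / D) :
    (B + r * t) / (D + r) ≤ B / D := by
  refine ENNReal.div_le_of_le_mul ?_
  calc B + r * t ≤ B / D * D + r * (B / D) := by
        rw [ENNReal.div_mul_cancel hD0 (ENNReal.add_ne_top.1 hDr).1]
        gcongr
    _ = B / D * (D + r) := by ring

end ENNReal

theorem stmt9_general {S A : Type*} [MeasurableSpace S]
    (As : S → Set A)
    (ν : S → A → Measure S)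
    (w : S → ℝ) (hw : ∀ x, 0 < w x)
    (hνw : ∀ x, ∀ a ∈ As x, ν x a Set.univ ≤ ENNReal.ofReal (w x))
    (α : ℝ) (hα : 0 < α)
    (c : S → A → ℝ)
    (u : S → ℝ≥0∞)
    (hfix : ∀ x : S, u x = ⨅ a ∈ As x,
      (ENNReal.ofReal (c x a) + ∫⁻ y, u y ∂(ν x a))
        / (ENNReal.ofReal α + ν x a Set.univ)) :
    ∀ x : S, u x = ⨅ a ∈ As x,
      (ENNReal.ofReal (c x a) + ∫⁻ y, u y ∂(ν x a)
          + (ENNReal.ofReal (w x) - ν x a Set.univ) * u x)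
        / ENNReal.ofReal (α + w x) := by
  intro x
  have hle : ∀ a ∈ As x, u x ≤ (ENNReal.ofReal (c x a) + ∫⁻ y, u y ∂(ν x a))
      / (ENNReal.ofReal α + ν x a Set.univ) :=
    fun a ha => (hfix x).trans_le (biInf_le _ ha)
  have hsplit : ∀ a ∈ As x, ENNReal.ofReal (α + w x)
      = ENNReal.ofReal α + ν x a Set.univ + (ENNReal.ofReal (w x) - ν x a Set.univ) := by
    intro a ha
    rw [ENNReal.ofReal_add hα.le (hw x).le, add_assoc, add_tsub_cancel_of_le (hνw x a ha)]
  have hD0 : ∀ a, ENNReal.ofReal α + ν x a Set.univ ≠ 0 := by simp [hα]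
  refine le_antisymm (le_iInf₂ fun a ha => ?_)
    ((iInf₂_mono fun a ha => ?_).trans_eq (hfix x).symm)
  · rw [hsplit a ha]
    exact le_add_mul_div_add_of_le_div (hD0 a) (hsplit a ha ▸ ofReal_ne_top) (hle a ha)
  · rw [hsplit a ha]
    exact add_mul_div_add_le_div_of_le_div (hD0 a) (hsplit a ha ▸ ofReal_ne_top) (hle a ha)

/-- If a Borel measurable `u : S → [0, +∞]` satisfies `u = T̃ u` pointwise, where
`(T̃ u)(x) = inf_{a ∈ A(x)} ( c(x,a) + ∫_S u dν(x,a) ) / (α + q_x(a))` with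
`q_x(a) := ν(x,a)(S)`, then `u = T u` pointwise, where
`(T u)(x) = inf_{a ∈ A(x)}
    ( c(x,a) + ∫_S u dν(x,a) + (w(x) − q_x(a))·u(x) ) / (α + w(x))`. -/
theorem stmt9 {S A : Type*} [MetricSpace S] [MeasurableSpace S] [BorelSpace S]
    (As : S → Set A) (hAs : ∀ x, (As x).Nonempty)
    (ν : S → A → Measure S)
    (hν0 : ∀ x, ∀ a ∈ As x, ν x a {x} = 0)
    (w : S → ℝ) (hw : ∀ x, 0 < w x)
    (hνw : ∀ x, ∀ a ∈ As x, ν x a Set.univ ≤ ENNReal.ofReal (w x))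
    (α : ℝ) (hα : 0 < α)
    (c : S → A → ℝ) (hc0 : ∀ x, ∀ a ∈ As x, 0 ≤ c x a)
    (u : S → ℝ≥0∞) (hu : Measurable u)
    (hfix : ∀ x : S, u x = ⨅ a ∈ As x,
      (ENNReal.ofReal (c x a) + ∫⁻ y, u y ∂(ν x a))
        / (ENNReal.ofReal α + ν x a Set.univ)) :
    ∀ x : S, u x = ⨅ a ∈ As x,
      (ENNReal.ofReal (c x a) + ∫⁻ y, u y ∂(ν x a)
          + (ENNReal.ofReal (w x) - ν x a Set.univ) * u x)
        / ENNReal.ofReal (α + w x) :=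
  stmt9_general As ν w hw hνw α hα c u hfix
end

section
/- If v : S → [0, +∞] is Borel measurable and satisfies v(x) = (Tv)(x) for every x ∈ S, then v(x) ≥ (T̃v)(x) for every x ∈ S. -/
open Filter Topology MeasureTheory ENNReal

/-! `(T v)(x)` averages `(T̃ v)(x)`-type quotients with `v x` itself: for each action `a`,
`(C + (W - q) v) / (α + W)` is a convex combination of `C / (α + q)` and `v`, with weight at
least `α / (α + W) > 0` on the first. So if `v x` is (nearly) attained by the infimum defining
`(T v)(x)`, the quotient `C / (α + q)` of a near-optimal action is at most `v x + ε`. -/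

namespace ENNReal

lemma div_le_add_of_add_tsub_mul_le {A W q C v ε : ℝ≥0∞} (hqW : q ≤ W) (hW : W ≠ ⊤) (hv : v ≠ ⊤)
    (h : C + (W - q) * v ≤ v * (A + W) + ε * A) :
    C / (A + q) ≤ v + ε := by
  have hmix : v * (A + W) + ε * A ≤ (v + ε) * (A + q) + (W - q) * v := by
    calc v * (A + W) + ε * A = v * A + v * q + v * (W - q) + ε * A := by
          conv_lhs => rw [← add_tsub_cancel_of_le hqW]
          ring
      _ ≤ v * A + v * q + v * (W - q) + ε * A + ε * q := le_self_add
      _ = (v + ε) * (A + q) + (W - q) * v := by ring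
  have hfin : (W - q) * v ≠ ⊤ := mul_ne_top (ne_top_of_le_ne_top hW tsub_le_self) hv
  exact div_le_of_le_mul ((ENNReal.add_le_add_iff_right hfin).1 (h.trans hmix))

lemma iInf_div_le_of_eq_iInf {ι : Type*} {s : Set ι} {C q : ι → ℝ≥0∞} {A W v : ℝ≥0∞}
    (hqW : ∀ i ∈ s, q i ≤ W) (hW : W ≠ ⊤) (hA0 : A ≠ 0) (hA : A ≠ ⊤)
    (hfix : v = ⨅ i ∈ s, (C i + (W - q i) * v) / (A + W)) :
    ⨅ i ∈ s, C i / (A + q i) ≤ v := by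
  rcases eq_or_ne v ⊤ with hv | hv
  · exact hv ▸ le_top
  refine le_of_forall_pos_le_add fun ε hε _ => ?_
  have hD0 : A + W ≠ 0 := by simp [hA0]
  have hD : A + W ≠ ⊤ := add_ne_top.2 ⟨hA, hW⟩
  have hδ : ε * A / (A + W) ≠ 0 :=
    (ENNReal.div_pos (mul_ne_zero (by exact_mod_cast hε.ne') hA0) hD).ne'
  obtain ⟨i, hi, hlt⟩ : ∃ i ∈ s, (C i + (W - q i) * v) / (A + W) < v + ε * A / (A + W) := by
    have hlt := lt_add_right hv hδ
    nth_rewrite 1 [hfix] at hlt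
    simpa only [iInf_lt_iff, exists_prop] using hlt
  rw [ENNReal.div_lt_iff (Or.inl hD0) (Or.inl hD), add_mul, ENNReal.div_mul_cancel hD0 hD] at hlt
  exact (iInf₂_le i hi).trans (div_le_add_of_add_tsub_mul_le (hqW i hi) hW hv hlt.le)

end ENNReal

theorem stmt10_general {S A : Type*} [MeasurableSpace S]
    (As : S → Set A)
    (ν : S → A → Measure S)
    (w : S → ℝ) (hw : ∀ x, 0 < w x)
    (hνw : ∀ x, ∀ a ∈ As x, ν x a Set.univ ≤ ENNReal.ofReal (w x))
    (α : ℝ) (hα : 0 < α)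
    (c : S → A → ℝ)
    (v : S → ℝ≥0∞)
    (hfix : ∀ x : S, v x = ⨅ a ∈ As x,
      (ENNReal.ofReal (c x a) + ∫⁻ y, v y ∂(ν x a)
          + (ENNReal.ofReal (w x) - ν x a Set.univ) * v x)
        / ENNReal.ofReal (α + w x)) :
    ∀ x : S, (⨅ a ∈ As x,
      (ENNReal.ofReal (c x a) + ∫⁻ y, v y ∂(ν x a))
        / (ENNReal.ofReal α + ν x a Set.univ)) ≤ v x := by
  intro x
  have hfix' := hfix x
  rw [ofReal_add hα.le (hw x).le] at hfix'
  exact iInf_div_le_of_eq_iInf (hνw x) ofReal_ne_top (by simpa using hα) ofReal_ne_top hfix'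

/-- If a Borel measurable `v : S → [0, +∞]` satisfies `v = T v` pointwise, where
`(T v)(x) = inf_{a ∈ A(x)}
    ( c(x,a) + ∫_S v dν(x,a) + (w(x) − q_x(a))·v(x) ) / (α + w(x))` with
`q_x(a) := ν(x,a)(S)`, then `v ≥ T̃ v` pointwise, where
`(T̃ v)(x) = inf_{a ∈ A(x)} ( c(x,a) + ∫_S v dν(x,a) ) / (α + q_x(a))`. -/
theorem stmt10 {S A : Type*} [MetricSpace S] [MeasurableSpace S] [BorelSpace S]
    (As : S → Set A) (hAs : ∀ x, (As x).Nonempty)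
    (ν : S → A → Measure S)
    (hν0 : ∀ x, ∀ a ∈ As x, ν x a {x} = 0)
    (w : S → ℝ) (hw : ∀ x, 0 < w x)
    (hνw : ∀ x, ∀ a ∈ As x, ν x a Set.univ ≤ ENNReal.ofReal (w x))
    (α : ℝ) (hα : 0 < α)
    (c : S → A → ℝ) (hc0 : ∀ x, ∀ a ∈ As x, 0 ≤ c x a)
    (v : S → ℝ≥0∞) (hv : Measurable v)
    (hfix : ∀ x : S, v x = ⨅ a ∈ As x,
      (ENNReal.ofReal (c x a) + ∫⁻ y, v y ∂(ν x a)
          + (ENNReal.ofReal (w x) - ν x a Set.univ) * v x)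
        / ENNReal.ofReal (α + w x)) :
    ∀ x : S, (⨅ a ∈ As x,
      (ENNReal.ofReal (c x a) + ∫⁻ y, v y ∂(ν x a))
        / (ENNReal.ofReal α + ν x a Set.univ)) ≤ v x :=
  stmt10_general As ν w hw hνw α hα c v hfix
end

section
/- Let a ≤ b be real numbers and let c, q : ℝ → [0, ∞) be Borel measurable functions that are Lebesgue integrable on [a, b]. Then ∫_a^b c(s)·exp(−∫_a^s q(θ)dθ) ds = (∫_a^b c(θ)dθ)·exp(−∫_a^b q(θ)dθ) + ∫_a^b (∫_a^s c(θ)dθ)·q(s)·exp(−∫_a^s q(θ)dθ) ds. -/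
/-!
With `C s = ∫_a^s c` and `E s = exp (-∫_a^s q)`, both functions are absolutely continuous on
`[a, b]`, with `C' = c` and `E' = -q E` almost everywhere (Lebesgue differentiation and the chain
rule), so the identity is integration by parts `∫ C' E = C b E b - ∫ C E'` for absolutely
continuous functions. `E` is absolutely continuous because `exp` is Lipschitz on the bounded
range of `∫_a^s q`.
-/

open MeasureTheory intervalIntegral Set Filter

theorem LipschitzOnWith.comp_absolutelyContinuousOnInterval {X Y : Type*}
    [PseudoMetricSpace X] [PseudoMetricSpace Y] {f : ℝ → X} {g : X → Y} {s : Set X}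
    {K : NNReal} {a b : ℝ} (hg : LipschitzOnWith K g s)
    (hf : AbsolutelyContinuousOnInterval f a b) (hfs : MapsTo f (uIcc a b) s) :
    AbsolutelyContinuousOnInterval (g ∘ f) a b := by
  unfold AbsolutelyContinuousOnInterval at hf ⊢
  refine squeeze_zero' (Eventually.of_forall fun _ ↦ Finset.sum_nonneg fun _ _ ↦ dist_nonneg)
    ?_ (by simpa using hf.const_mul (K : ℝ))
  rw [eventually_inf_principal]
  filter_upwards with ⟨n, I⟩ hnI
  rw [Finset.mul_sum]
  gcongr with i hi
  exact hg.dist_le_mul _ (hfs (hnI.1 i hi).1) _ (hfs (hnI.1 i hi).2)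

theorem ContDiff.comp_absolutelyContinuousOnInterval {E F : Type*}
    [NormedAddCommGroup E] [NormedSpace ℝ E] [FiniteDimensional ℝ E]
    [NormedAddCommGroup F] [NormedSpace ℝ F] {f : ℝ → E} {g : E → F} {a b : ℝ}
    (hg : ContDiff ℝ 1 g) (hf : AbsolutelyContinuousOnInterval f a b) :
    AbsolutelyContinuousOnInterval (g ∘ f) a b := by
  obtain ⟨M, hM⟩ := hf.exists_bound
  obtain ⟨K, hK⟩ := hg.contDiffOn.exists_lipschitzOnWith one_ne_zero (convex_closedBall 0 M)
    (isCompact_closedBall 0 M)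
  exact hK.comp_absolutelyContinuousOnInterval hf fun x hx ↦ mem_closedBall_zero_iff.2 (hM x hx)

theorem intervalIntegral.integral_mul_exp_neg_integral {c q : ℝ → ℝ} {a b : ℝ}
    (hc : IntervalIntegrable c volume a b) (hq : IntervalIntegrable q volume a b) :
    ∫ s in a..b, c s * Real.exp (-∫ θ in a..s, q θ)
      = (∫ θ in a..b, c θ) * Real.exp (-∫ θ in a..b, q θ)
        + ∫ s in a..b, (∫ θ in a..s, c θ) * q s * Real.exp (-∫ θ in a..s, q θ) := by
  set C := fun x ↦ ∫ θ in a..x, c θ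
  set E := fun x ↦ Real.exp (-∫ θ in a..x, q θ)
  have hCac : AbsolutelyContinuousOnInterval C a b :=
    hc.absolutelyContinuousOnInterval_intervalIntegral left_mem_uIcc
  have hEac : AbsolutelyContinuousOnInterval E a b :=
    (Real.contDiff_exp.comp contDiff_neg).comp_absolutelyContinuousOnInterval
      (hq.absolutelyContinuousOnInterval_intervalIntegral left_mem_uIcc)
  have hC' : ∀ᵐ x, x ∈ uIoc a b → deriv C x = c x := by
    filter_upwards [hc.ae_hasDerivAt_integral] with x hx hxab
    exact (hx (uIoc_subset_uIcc hxab) a left_mem_uIcc).deriv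
  have hE' : ∀ᵐ x, x ∈ uIoc a b → deriv E x = -(q x * E x) := by
    filter_upwards [hq.ae_hasDerivAt_integral] with x hx hxab
    have hEx : HasDerivAt E (E x * -q x) x :=
      (hx (uIoc_subset_uIcc hxab) a left_mem_uIcc).neg.exp
    rw [hEx.deriv, mul_neg, mul_comm]
  have hC'E : ∫ x in a..b, deriv C x * E x = ∫ x in a..b, c x * E x :=
    integral_congr_ae (hC'.mono fun x hx hxab ↦ by rw [hx hxab])
  have hCE' : ∫ x in a..b, C x * deriv E x = -∫ x in a..b, C x * q x * E x := by
    rw [← integral_neg]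
    exact integral_congr_ae (hE'.mono fun x hx hxab ↦ by rw [hx hxab]; ring)
  have ibp := hCac.integral_mul_deriv_eq_deriv_mul hEac
  rw [hC'E, hCE'] at ibp
  simp only [C, integral_same, zero_mul, sub_zero] at ibp
  linarith

theorem stmt11_general (a b : ℝ) (hab : a ≤ b) (c q : ℝ → ℝ)
    (hci : IntegrableOn c (Set.Icc a b)) (hqi : IntegrableOn q (Set.Icc a b)) :
    ∫ s in a..b, c s * Real.exp (-∫ θ in a..s, q θ)
      = (∫ θ in a..b, c θ) * Real.exp (-∫ θ in a..b, q θ)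
        + ∫ s in a..b, (∫ θ in a..s, c θ) * q s * Real.exp (-∫ θ in a..s, q θ) :=
  integral_mul_exp_neg_integral ((intervalIntegrable_iff_integrableOn_Icc_of_le hab).2 hci)
    ((intervalIntegrable_iff_integrableOn_Icc_of_le hab).2 hqi)

/-- Integration by parts: for `a ≤ b` and nonnegative Borel functions `c, q` that are
Lebesgue integrable on `[a,b]`,
`∫_a^b c(s) e^{−∫_a^s q} ds
  = (∫_a^b c) e^{−∫_a^b q} + ∫_a^b (∫_a^s c) q(s) e^{−∫_a^s q} ds`. -/
theorem stmt11 (a b : ℝ) (hab : a ≤ b) (c q : ℝ → ℝ)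
    (hcm : Measurable c) (hqm : Measurable q)
    (hc0 : ∀ t, 0 ≤ c t) (hq0 : ∀ t, 0 ≤ q t)
    (hci : IntegrableOn c (Set.Icc a b)) (hqi : IntegrableOn q (Set.Icc a b)) :
    ∫ s in a..b, c s * Real.exp (-∫ θ in a..s, q θ)
      = (∫ θ in a..b, c θ) * Real.exp (-∫ θ in a..b, q θ)
        + ∫ s in a..b, (∫ θ in a..s, c θ) * q s * Real.exp (-∫ θ in a..s, q θ) :=
  stmt11_general a b hab c q hci hqi
end

section
/- Let d : K → [0, +∞] be K-inf-compact. Define v_0(x) := 0 for all x ∈ S and, recursively, v_{n+1}(x) := inf_{a ∈ A(x)} ( d(x,a) + ∫_S v_n dQ(x,a) ) for every n ≥ 0 and x ∈ S. Then the sequence (v_n) is pointwise nondecreasing, each v_n is lower semicontinuous on S, and the pointwise limit v_∞(x) := sup_n v_n(x) is lower semicontinuous on S and satisfies the Bellman equation v_∞(x) = inf_{a ∈ A(x)} ( d(x,a) + ∫_S v_∞ dQ(x,a) ) for every x ∈ S. -/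
open Filter Topology MeasureTheory ENNReal

/-- `f : K → [0, +∞]` is `K`-inf-compact on the graph `K = {(x,a) : x ∈ S, a ∈ A(x)}`
of the multifunction `As`. -/
def KInfCompactENN {S A : Type*} [MetricSpace S] [MetricSpace A]
    (As : S → Set A) (f : S × A → ℝ≥0∞) : Prop :=
  LowerSemicontinuousOn f {p : S × A | p.2 ∈ As p.1} ∧
    ∀ (xs : ℕ → S) (as : ℕ → A) (x : S),
      Tendsto xs atTop (𝓝 x) → (∀ n, as n ∈ As (xs n)) →
      (∃ M : ℝ, ∀ n, f (xs n, as n) ≤ ENNReal.ofReal M) →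
      ∃ a ∈ As x, ∃ φ : ℕ → ℕ, StrictMono φ ∧ Tendsto (as ∘ φ) atTop (𝓝 a)

/-
Weak continuity of `Q` and the Portmanteau theorem make `(x, a) ↦ ∫ g dQ(x, a)` lower
semicontinuous on `K` for every lower semicontinuous `g ≥ 0`. Given near-minimizers
`aₙ ∈ A(xₙ)` of a cost `u ≥ d` at points `xₙ → x`, inf-compactness of `d` yields a limit point
`a ∈ A(x)`, and lower semicontinuity of `u` bounds `u(x, a)`. This gives the lower
semicontinuity of `x ↦ inf_{a ∈ A(x)} u(x, a)`, hence of every `vₙ` by induction, and, for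
nondecreasing families `uₙ`, the interchange `inf_a supₙ uₙ = supₙ inf_a uₙ`; with monotone
convergence the latter turns `v_∞ = supₙ v_{n+1}` into the Bellman equation.
-/

section Portmanteau

variable {Ω : Type*} [MeasurableSpace Ω] [TopologicalSpace Ω] [OpensMeasurableSpace Ω]
  {μ : Measure Ω} {μs : ℕ → Measure Ω}

lemma lintegral_ofReal_le_liminf_of_lowerSemicontinuous {f : Ω → ℝ}
    (hf : LowerSemicontinuous f) (f_nn : 0 ≤ f)
    (h_opens : ∀ G, IsOpen G → μ G ≤ atTop.liminf (fun i ↦ μs i G)) :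
    ∫⁻ x, ENNReal.ofReal (f x) ∂μ ≤
      atTop.liminf (fun i ↦ ∫⁻ x, ENNReal.ofReal (f x) ∂(μs i)) := by
  -- Superlevel sets of `f` are open: the layer-cake formula reduces this to `h_opens` and Fatou.
  simp_rw [lintegral_eq_lintegral_meas_lt _ (Eventually.of_forall f_nn)
    hf.measurable.aemeasurable]
  exact (lintegral_mono fun t ↦ h_opens _ (hf.isOpen_preimage t)).trans
    (lintegral_liminf_le fun n ↦ Antitone.measurable fun s t hst ↦
      measure_mono fun ω hω ↦ hst.trans_lt hω)

lemma lintegral_le_liminf_of_lowerSemicontinuous {g : Ω → ℝ≥0∞} (hg : LowerSemicontinuous g)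
    (h_opens : ∀ G, IsOpen G → μ G ≤ atTop.liminf (fun i ↦ μs i G)) :
    ∫⁻ x, g x ∂μ ≤ atTop.liminf (fun i ↦ ∫⁻ x, g x ∂(μs i)) := by
  have htrunc (n : ℕ) :
      ∫⁻ x, min (n : ℝ≥0∞) (g x) ∂μ ≤ atTop.liminf (fun i ↦ ∫⁻ x, g x ∂(μs i)) := by
    have hn : (n : ℝ≥0∞) ≠ ∞ := natCast_ne_top n
    have hofReal (x : Ω) :
        ENNReal.ofReal (truncateToReal n (g x)) = min (n : ℝ≥0∞) (g x) :=
      ofReal_toReal ((min_le_left _ _).trans_lt (natCast_lt_top n)).ne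
    have h := lintegral_ofReal_le_liminf_of_lowerSemicontinuous
      ((continuous_truncateToReal hn).comp_lowerSemicontinuous hg (monotone_truncateToReal hn))
      (fun _ ↦ truncateToReal_nonneg) h_opens
    simp only [Function.comp_apply, hofReal] at h
    exact h.trans (liminf_le_liminf (Eventually.of_forall fun i ↦
      lintegral_mono fun x ↦ min_le_right _ _))
  calc ∫⁻ x, g x ∂μ = ⨆ n : ℕ, ∫⁻ x, min (n : ℝ≥0∞) (g x) ∂μ := by
        rw [← lintegral_iSup (fun n ↦ measurable_const.min hg.measurable)
          fun m n hmn x ↦ min_le_min_right _ (Nat.cast_le.2 hmn)]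
        simp_rw [← iSup_inf_eq, iSup_natCast, top_inf_eq]
    _ ≤ _ := iSup_le htrunc

end Portmanteau

lemma lowerSemicontinuousWithinAt_of_seq {α γ : Type*} [TopologicalSpace α]
    [FirstCountableTopology α] [LinearOrder γ] {f : α → γ} {s : Set α} {x : α}
    (h : ∀ (xs : ℕ → α) (c : γ), (∀ k, xs k ∈ s) → Tendsto xs atTop (𝓝 x) →
      (∀ k, f (xs k) ≤ c) → f x ≤ c) :
    LowerSemicontinuousWithinAt f s x := by
  intro c hc
  by_contra hev
  obtain ⟨xs, hxs, hfxs⟩ :=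
    exists_seq_forall_of_frequently (frequently_nhdsWithin_iff.1 (not_eventually.1 hev))
  exact (h xs c (fun k ↦ (hfxs k).2) hxs fun k ↦ not_lt.1 (hfxs k).1).not_gt hc

lemma lowerSemicontinuousOn_lintegral {X Ω : Type*} [TopologicalSpace X]
    [FirstCountableTopology X] [MeasurableSpace Ω] [TopologicalSpace Ω]
    [OpensMeasurableSpace Ω] [HasOuterApproxClosed Ω] {κ : X → Measure Ω} {s : Set X}
    (hprob : ∀ p ∈ s, IsProbabilityMeasure (κ p))
    (hweak : ∀ f : BoundedContinuousFunction Ω ℝ, ContinuousOn (fun p ↦ ∫ y, f y ∂(κ p)) s)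
    {g : Ω → ℝ≥0∞} (hg : LowerSemicontinuous g) :
    LowerSemicontinuousOn (fun p ↦ ∫⁻ y, g y ∂(κ p)) s := by
  intro q hq
  refine lowerSemicontinuousWithinAt_of_seq fun ps c hps hlim hle ↦ ?_
  let ν : ℕ → ProbabilityMeasure Ω := fun k ↦ ⟨κ (ps k), hprob _ (hps k)⟩
  let ν₀ : ProbabilityMeasure Ω := ⟨κ q, hprob q hq⟩
  have hν : Tendsto ν atTop (𝓝 ν₀) := by
    rw [ProbabilityMeasure.tendsto_iff_forall_integral_tendsto]
    exact fun f ↦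
      (hweak f q hq).tendsto.comp (tendsto_nhdsWithin_iff.2 ⟨hlim, .of_forall hps⟩)
  calc ∫⁻ y, g y ∂(κ q) ≤ atTop.liminf fun k ↦ ∫⁻ y, g y ∂(κ (ps k)) :=
        lintegral_le_liminf_of_lowerSemicontinuous hg fun G hG ↦
          ProbabilityMeasure.le_liminf_measure_open_of_tendsto hν hG
    _ ≤ c := liminf_le_of_frequently_le' (Frequently.of_forall hle)

namespace KInfCompactENN

variable {S A : Type*} [MetricSpace S] [MetricSpace A] {As : S → Set A} {d : S × A → ℝ≥0∞}

lemma exists_forall_le_of_tendsto (hd : KInfCompactENN As d) {u : ℕ → S × A → ℝ≥0∞}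
    (hu : ∀ m, LowerSemicontinuousOn (u m) {p | p.2 ∈ As p.1}) (hmono : Monotone u)
    (hdu : ∀ n p, d p ≤ u n p) {xs : ℕ → S} {as : ℕ → A} {x : S} {c : ℝ≥0∞} (hc : c ≠ ∞)
    (hxs : Tendsto xs atTop (𝓝 x)) (has : ∀ n, as n ∈ As (xs n))
    (hle : ∀ n, u n (xs n, as n) ≤ c + ((n : ℝ≥0∞) + 1)⁻¹) :
    ∃ a ∈ As x, ∀ m, u m (x, a) ≤ c := by
  have hbdd (n : ℕ) : d (xs n, as n) ≤ ENNReal.ofReal (c + 1).toReal := by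
    rw [ofReal_toReal (add_ne_top.2 ⟨hc, one_ne_top⟩)]
    exact (hdu n _).trans
      ((hle n).trans (add_le_add_right (ENNReal.inv_le_one.2 le_add_self) c))
  obtain ⟨a, ha, φ, hφ, has_lim⟩ := hd.2 xs as x hxs has ⟨_, hbdd⟩
  refine ⟨a, ha, fun m ↦ ?_⟩
  have hp : Tendsto (fun k ↦ (xs (φ k), as (φ k))) atTop (𝓝[{p | p.2 ∈ As p.1}] (x, a)) :=
    tendsto_nhdsWithin_iff.2
      ⟨(hxs.comp hφ.tendsto_atTop).prodMk_nhds has_lim, .of_forall fun k ↦ has (φ k)⟩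
  have hε : Tendsto (fun k ↦ c + ((φ k : ℝ≥0∞) + 1)⁻¹) atTop (𝓝 c) := by
    have h := ENNReal.tendsto_inv_nat_nhds_zero.comp
      ((tendsto_add_atTop_nat 1).comp hφ.tendsto_atTop)
    simpa using tendsto_const_nhds.add h
  calc u m (x, a) ≤ atTop.liminf fun k ↦ u m (xs (φ k), as (φ k)) :=
        ((hu m).le_liminf (x, a) ha).trans hp.liminf_le_liminf_comp
    _ ≤ atTop.liminf fun k ↦ c + ((φ k : ℝ≥0∞) + 1)⁻¹ :=
        liminf_le_liminf ((hφ.tendsto_atTop.eventually_ge_atTop m).mono fun k hk ↦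
          (hmono hk _).trans (hle (φ k)))
    _ = c := hε.liminf_eq

lemma lowerSemicontinuous_biInf (hd : KInfCompactENN As d) {u : S × A → ℝ≥0∞}
    (hu : LowerSemicontinuousOn u {p | p.2 ∈ As p.1}) (hdu : ∀ p, d p ≤ u p) :
    LowerSemicontinuous fun x ↦ ⨅ a ∈ As x, u (x, a) := by
  refine fun x ↦ lowerSemicontinuousWithinAt_univ_iff.1 <|
    lowerSemicontinuousWithinAt_of_seq fun xs c _ hxs hle ↦ ?_
  rcases eq_or_ne c ∞ with rfl | hc
  · exact le_top
  have hnear (n : ℕ) : ∃ a ∈ As (xs n), u (xs n, a) < c + ((n : ℝ≥0∞) + 1)⁻¹ := by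
    simpa only [iInf_lt_iff, exists_prop] using (hle n).trans_lt (lt_add_right hc (by simp))
  choose as has hlt using hnear
  obtain ⟨a, ha, hua⟩ := hd.exists_forall_le_of_tendsto (u := fun _ ↦ u) (fun _ ↦ hu)
    monotone_const (fun _ ↦ hdu) hc hxs has fun n ↦ (hlt n).le
  exact iInf₂_le_of_le a ha (hua 0)

lemma biInf_iSup_eq_iSup_biInf (hd : KInfCompactENN As d) {u : ℕ → S × A → ℝ≥0∞}
    (hu : ∀ m, LowerSemicontinuousOn (u m) {p | p.2 ∈ As p.1}) (hmono : Monotone u)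
    (hdu : ∀ n p, d p ≤ u n p) (x : S) :
    ⨅ a ∈ As x, ⨆ n, u n (x, a) = ⨆ n, ⨅ a ∈ As x, u n (x, a) := by
  refine le_antisymm ?_ (iSup_le fun n ↦ le_iInf₂ fun a ha ↦
    (iInf₂_le a ha).trans (le_iSup (fun n ↦ u n (x, a)) n))
  set c := ⨆ n, ⨅ a ∈ As x, u n (x, a)
  rcases eq_or_ne c ∞ with hc | hc
  · exact hc ▸ le_top
  have hnear (n : ℕ) : ∃ a ∈ As x, u n (x, a) < c + ((n : ℝ≥0∞) + 1)⁻¹ := by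
    simpa only [iInf_lt_iff, exists_prop] using
      (le_iSup (fun n ↦ ⨅ a ∈ As x, u n (x, a)) n).trans_lt (lt_add_right hc (by simp))
  choose as has hlt using hnear
  obtain ⟨a, ha, hua⟩ := hd.exists_forall_le_of_tendsto hu hmono hdu hc tendsto_const_nhds has
    fun n ↦ (hlt n).le
  exact iInf₂_le_of_le a ha (iSup_le hua)

end KInfCompactENN

theorem stmt12_general {S A : Type*} [MetricSpace S] [MetricSpace A]
    [MeasurableSpace S] [BorelSpace S]
    (As : S → Set A)
    (Q : S × A → Measure S)
    (hQprob : ∀ p : S × A, p.2 ∈ As p.1 → IsProbabilityMeasure (Q p))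
    (hQweak : ∀ f : BoundedContinuousFunction S ℝ,
      ContinuousOn (fun p : S × A => ∫ y, f y ∂(Q p)) {p : S × A | p.2 ∈ As p.1})
    (d : S × A → ℝ≥0∞) (hd : KInfCompactENN As d)
    (v : ℕ → S → ℝ≥0∞)
    (hv0 : ∀ x, v 0 x = 0)
    (hvrec : ∀ n x, v (n + 1) x = ⨅ a ∈ As x, (d (x, a) + ∫⁻ y, v n y ∂(Q (x, a)))) :
    (∀ n x, v n x ≤ v (n + 1) x)
    ∧ (∀ n, LowerSemicontinuous (v n))
    ∧ LowerSemicontinuous (fun x => ⨆ n, v n x)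
    ∧ ∀ x, (⨆ n, v n x)
        = ⨅ a ∈ As x, (d (x, a) + ∫⁻ y, (⨆ n, v n y) ∂(Q (x, a))) := by
  have hmono : ∀ n x, v n x ≤ v (n + 1) x := by
    intro n
    induction n with
    | zero => simp [hv0]
    | succ n ih =>
      intro x
      rw [hvrec n x, hvrec (n + 1) x]
      gcongr
      exact ih _
  have hv_mono (x : S) : Monotone fun n ↦ v n x := monotone_nat_of_le_succ fun n ↦ hmono n x
  have hlsc : ∀ n, LowerSemicontinuous (v n) := by
    intro n
    induction n with
    | zero => simpa [funext hv0] using lowerSemicontinuous_const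
    | succ n ih =>
      rw [funext (hvrec n)]
      exact hd.lowerSemicontinuous_biInf
        (hd.1.add (lowerSemicontinuousOn_lintegral hQprob hQweak ih)) fun _ ↦ le_self_add
  refine ⟨hmono, hlsc, lowerSemicontinuous_iSup hlsc, fun x ↦ ?_⟩
  let u : ℕ → S × A → ℝ≥0∞ := fun n p ↦ d p + ∫⁻ y, v n y ∂(Q p)
  have hu (n : ℕ) : LowerSemicontinuousOn (u n) {p | p.2 ∈ As p.1} :=
    hd.1.add (lowerSemicontinuousOn_lintegral hQprob hQweak (hlsc n))
  have hu_mono : Monotone u := fun m n hmn p ↦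
    add_le_add_right (lintegral_mono fun y ↦ hv_mono y hmn) _
  calc ⨆ n, v n x = ⨆ n, v (n + 1) x := ((hv_mono x).iSup_nat_add 1).symm
    _ = ⨆ n, ⨅ a ∈ As x, u n (x, a) := by simp_rw [hvrec, u]
    _ = ⨅ a ∈ As x, ⨆ n, u n (x, a) :=
        (hd.biInf_iSup_eq_iSup_biInf hu hu_mono (fun _ _ ↦ le_self_add) x).symm
    _ = _ := by
        simp_rw [u, ← ENNReal.add_iSup, lintegral_iSup (fun n ↦ (hlsc n).measurable)
          fun m n hmn y ↦ hv_mono y hmn]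

/-- Value iteration: for a `K`-inf-compact cost `d : K → [0,+∞]` and a weakly continuous
probability kernel `Q` on `K`, the iterates `v₀ := 0`,
`v_{n+1}(x) := inf_{a ∈ A(x)} ( d(x,a) + ∫_S v_n dQ(x,a) )` are pointwise nondecreasing
and lower semicontinuous, and the pointwise limit `v_∞ = sup_n v_n` is lower
semicontinuous and satisfies the Bellman equation
`v_∞(x) = inf_{a ∈ A(x)} ( d(x,a) + ∫_S v_∞ dQ(x,a) )`. -/
theorem stmt12 {S A : Type*} [MetricSpace S] [MetricSpace A]
    [MeasurableSpace S] [BorelSpace S]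
    (As : S → Set A) (hAs : ∀ x, (As x).Nonempty)
    (Q : S × A → Measure S)
    (hQprob : ∀ p : S × A, p.2 ∈ As p.1 → IsProbabilityMeasure (Q p))
    (hQweak : ∀ f : BoundedContinuousFunction S ℝ,
      ContinuousOn (fun p : S × A => ∫ y, f y ∂(Q p)) {p : S × A | p.2 ∈ As p.1})
    (d : S × A → ℝ≥0∞) (hd : KInfCompactENN As d)
    (v : ℕ → S → ℝ≥0∞)
    (hv0 : ∀ x, v 0 x = 0)
    (hvrec : ∀ n x, v (n + 1) x = ⨅ a ∈ As x, (d (x, a) + ∫⁻ y, v n y ∂(Q (x, a)))) :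
    (∀ n x, v n x ≤ v (n + 1) x)
    ∧ (∀ n, LowerSemicontinuous (v n))
    ∧ LowerSemicontinuous (fun x => ⨆ n, v n x)
    ∧ ∀ x, (⨆ n, v n x)
        = ⨅ a ∈ As x, (d (x, a) + ∫⁻ y, (⨆ n, v n y) ∂(Q (x, a))) :=
  stmt12_general As Q hQprob hQweak d hd v hv0 hvrec
end

section
/- Suppose a Borel measurable v : S → [0, ∞) satisfies v(x) = inf_{a ∈ A(x)} ( c(x,a)/(α + w(x)) + (w(x)/(w(x) + α))·∫_S v dP(x,a) ) for every x ∈ S, where the integrals are Lebesgue integrals with values in [0, +∞]. Put m := inf_{x ∈ S} v(x) and h(x) := v(x) − m. Then for every x ∈ S, (w(x) + α)·h(x) + α·m = inf_{a ∈ A(x)} ( c(x,a) + w(x)·∫_S h dP(x,a) ). -/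
open MeasureTheory ENNReal

/-!
Write `m := inf v` and `h := v - m`, so `∫ v dP = ∫ h dP + m` for probability measures `P`.
Multiplying the fixed-point equation by `w x + α` clears the denominators, and the constant
`m` then splits off the infimum as the finite summand `w x * m`. Since `(w x + α) v x` equals
`(w x + α) h x + α m + w x m`, cancelling `w x * m` on both sides gives the claim.
-/

lemma ENNReal.ofReal_sub_add_ofReal {a m : ℝ} (hm : 0 ≤ m) (h : m ≤ a) :
    ENNReal.ofReal (a - m) + ENNReal.ofReal m = ENNReal.ofReal a := by
  rw [← ENNReal.ofReal_add (sub_nonneg.2 h) hm, sub_add_cancel]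

lemma MeasureTheory.lintegral_ofReal_sub_add_ofReal {S : Type*} [MeasurableSpace S]
    (μ : Measure S) [IsProbabilityMeasure μ] {f : S → ℝ} {m : ℝ} (hm : 0 ≤ m)
    (hf : ∀ y, m ≤ f y) :
    ∫⁻ y, ENNReal.ofReal (f y - m) ∂μ + ENNReal.ofReal m = ∫⁻ y, ENNReal.ofReal (f y) ∂μ := by
  calc ∫⁻ y, ENNReal.ofReal (f y - m) ∂μ + ENNReal.ofReal m
      = ∫⁻ y, (ENNReal.ofReal (f y - m) + ENNReal.ofReal m) ∂μ := by
        rw [lintegral_add_right _ measurable_const, lintegral_const, measure_univ, mul_one]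
    _ = ∫⁻ y, ENNReal.ofReal (f y) ∂μ := by
        simp only [ENNReal.ofReal_sub_add_ofReal hm (hf _)]

lemma ENNReal.mul_biInf_div_add_div_mul {ι : Type*} (s : Set ι) {W ω : ℝ≥0∞} (h0 : W ≠ 0)
    (ht : W ≠ ∞) (C I : ι → ℝ≥0∞) :
    W * ⨅ i ∈ s, (C i / W + ω / W * I i) = ⨅ i ∈ s, (C i + ω * I i) := by
  simp only [ENNReal.mul_iInf_of_ne h0 ht, mul_add, ENNReal.mul_div_cancel h0 ht, ← mul_assoc]

lemma ENNReal.biInf_add {ι : Type*} (s : Set ι) (f : ι → ℝ≥0∞) (a : ℝ≥0∞) :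
    (⨅ i ∈ s, f i) + a = ⨅ i ∈ s, (f i + a) := by
  simp only [ENNReal.iInf_add]

theorem stmt13_general {S A : Type*} [MeasurableSpace S] (As : S → Set A)
    (P : S → A → Measure S) (hP : ∀ x, ∀ a ∈ As x, IsProbabilityMeasure (P x a))
    (α : ℝ) (hα : 0 < α) (w : S → ℝ) (hw : ∀ x, 0 < w x)
    (c : S → A → ℝ) (v : S → ℝ) (hv0 : ∀ x, 0 ≤ v x)
    (hfix : ∀ x : S, ENNReal.ofReal (v x) = ⨅ a ∈ As x,
      (ENNReal.ofReal (c x a) / ENNReal.ofReal (α + w x)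
        + (ENNReal.ofReal (w x) / ENNReal.ofReal (w x + α))
            * ∫⁻ y, ENNReal.ofReal (v y) ∂(P x a))) :
    ∀ x : S,
      ENNReal.ofReal ((w x + α) * (v x - ⨅ z, v z)) + ENNReal.ofReal (α * ⨅ z, v z)
        = ⨅ a ∈ As x, (ENNReal.ofReal (c x a)
            + ENNReal.ofReal (w x) * ∫⁻ y, ENNReal.ofReal (v y - ⨅ z, v z) ∂(P x a)) := by
  intro x
  set m : ℝ := ⨅ z, v z
  have hm0 : 0 ≤ m := Real.iInf_nonneg hv0
  have hmle : ∀ z, m ≤ v z := ciInf_le ⟨0, Set.forall_mem_range.2 hv0⟩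
  have hwα : 0 < w x + α := add_pos (hw x) hα
  have hscaled : ENNReal.ofReal ((w x + α) * v x)
      = (⨅ a ∈ As x, (ENNReal.ofReal (c x a)
          + ENNReal.ofReal (w x) * ∫⁻ y, ENNReal.ofReal (v y - m) ∂(P x a)))
        + ENNReal.ofReal (w x * m) := by
    rw [ENNReal.ofReal_mul hwα.le, hfix x, add_comm α,
      ENNReal.mul_biInf_div_add_div_mul _ (by simpa using hwα) ofReal_ne_top,
      ENNReal.biInf_add]
    refine biInf_congr fun a ha => ?_
    have := hP x a ha
    rw [← lintegral_ofReal_sub_add_ofReal (P x a) hm0 hmle, mul_add,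
      ← ENNReal.ofReal_mul (hw x).le, add_assoc]
  have hsplit : ENNReal.ofReal ((w x + α) * (v x - m)) + ENNReal.ofReal (α * m)
        + ENNReal.ofReal (w x * m) = ENNReal.ofReal ((w x + α) * v x) := by
    have h₁ : 0 ≤ (w x + α) * (v x - m) := mul_nonneg hwα.le (sub_nonneg.2 (hmle x))
    have h₂ : 0 ≤ α * m := mul_nonneg hα.le hm0
    rw [← ENNReal.ofReal_add h₁ h₂, ← ENNReal.ofReal_add (add_nonneg h₁ h₂)
      (mul_nonneg (hw x).le hm0)]
    ring_nf
  rwa [← ENNReal.add_left_inj ofReal_ne_top, hsplit]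

/-- If a Borel measurable `v : S → [0, ∞)` satisfies
`v(x) = inf_{a ∈ A(x)} ( c(x,a)/(α + w(x)) + (w(x)/(w(x)+α)) ∫_S v dP(x,a) )`
for every `x`, then with `m := inf_{x ∈ S} v(x)` and `h := v − m`, for every `x ∈ S`:
`(w(x)+α)·h(x) + α·m = inf_{a ∈ A(x)} ( c(x,a) + w(x) ∫_S h dP(x,a) )`. -/
theorem stmt13 {S A : Type*} [MetricSpace S] [Nonempty S]
    [MeasurableSpace S] [BorelSpace S]
    (As : S → Set A) (hAs : ∀ x, (As x).Nonempty)
    (P : S → A → Measure S) (hP : ∀ x, ∀ a ∈ As x, IsProbabilityMeasure (P x a))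
    (α : ℝ) (hα : 0 < α) (w : S → ℝ) (hw : ∀ x, 0 < w x)
    (c : S → A → ℝ) (hc0 : ∀ x, ∀ a ∈ As x, 0 ≤ c x a)
    (v : S → ℝ) (hvm : Measurable v) (hv0 : ∀ x, 0 ≤ v x)
    (hfix : ∀ x : S, ENNReal.ofReal (v x) = ⨅ a ∈ As x,
      (ENNReal.ofReal (c x a) / ENNReal.ofReal (α + w x)
        + (ENNReal.ofReal (w x) / ENNReal.ofReal (w x + α))
            * ∫⁻ y, ENNReal.ofReal (v y) ∂(P x a))) :
    ∀ x : S,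
      ENNReal.ofReal ((w x + α) * (v x - ⨅ z, v z)) + ENNReal.ofReal (α * ⨅ z, v z)
        = ⨅ a ∈ As x, (ENNReal.ofReal (c x a)
            + ENNReal.ofReal (w x) * ∫⁻ y, ENNReal.ofReal (v y - ⨅ z, v z) ∂(P x a)) :=
  stmt13_general As P hP α hα w hw c v hv0 hfix
end

section
/- Suppose that for every bounded continuous f : S → ℝ the map (x,a) ↦ ∫_S f dν(x,a) − q_x(a)·f(x) is continuous on K. Define P(x,a) := (1/w(x))·ν(x,a) + (1 − q_x(a)/w(x))·δ_x, where δ_x is the Dirac measure at x. Then each P(x,a) is a Borel probability measure on S, and for every bounded continuous f : S → ℝ the map (x,a) ↦ ∫_S f dP(x,a) is continuous on K; that is, the kernel P is weakly continuous on K. -/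
open MeasureTheory ENNReal

/- The kernel `P(x,a)` is the uniformization of the jump intensity `ν(x,a)` at rate `w(x)`:
its integral against `f` is `f(x) + (∫ f dν(x,a) − q_x(a) f(x)) / w(x)`, an affine expression in
the continuous map of the hypothesis with the continuous coefficient `1 / w(x)`. The mass
bound `q_x(a) ≤ w(x)` is exactly what makes the Dirac weight `1 − q_x(a)/w(x)` nonnegative,
so that the total mass is `1` rather than being cut off by truncated subtraction. -/

namespace MeasureTheory.Measure

variable {X : Type*} [MeasurableSpace X]

noncomputable def uniformization (μ : Measure X) (w : ℝ) (x : X) : Measure X :=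
  (ENNReal.ofReal w)⁻¹ • μ + (1 - μ Set.univ / ENNReal.ofReal w) • dirac x

variable {μ : Measure X} {w : ℝ}

lemma measure_univ_div_ofReal_le_one (hμw : μ Set.univ ≤ ENNReal.ofReal w) :
    μ Set.univ / ENNReal.ofReal w ≤ 1 :=
  ENNReal.div_le_of_le_mul (by rwa [one_mul])

lemma isProbabilityMeasure_uniformization (hμw : μ Set.univ ≤ ENNReal.ofReal w)
    (x : X) : IsProbabilityMeasure (uniformization μ w x) := by
  constructor
  simp only [uniformization, add_apply, smul_apply, dirac_apply_of_mem (Set.mem_univ x),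
    smul_eq_mul, mul_one]
  rw [← ENNReal.div_eq_inv_mul, add_tsub_cancel_of_le (measure_univ_div_ofReal_le_one hμw)]

lemma integral_uniformization [MeasurableSingletonClass X] [IsFiniteMeasure μ] (hw : 0 < w)
    (hμw : μ Set.univ ≤ ENNReal.ofReal w) (x : X) {f : X → ℝ} (hf : Integrable f μ) :
    ∫ y, f y ∂(uniformization μ w x) = w⁻¹ * ((∫ y, f y ∂μ) - μ.real Set.univ * f x) + f x := by
  have hdirac_weight : (1 - μ Set.univ / ENNReal.ofReal w).toReal = 1 - μ.real Set.univ / w := by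
    rw [ENNReal.toReal_sub_of_le (measure_univ_div_ofReal_le_one hμw) one_ne_top,
      ENNReal.toReal_div, ENNReal.toReal_ofReal hw.le, ENNReal.toReal_one, measureReal_def]
  rw [uniformization, integral_add_measure
      (hf.smul_measure (ENNReal.inv_ne_top.2 (by simpa using hw)))
      ((integrable_dirac enorm_lt_top).smul_measure (ne_top_of_le_ne_top one_ne_top tsub_le_self)),
    integral_smul_measure, integral_smul_measure, integral_dirac, hdirac_weight,
    ENNReal.toReal_inv, ENNReal.toReal_ofReal hw.le, smul_eq_mul, smul_eq_mul]
  field_simp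
  ring

end MeasureTheory.Measure

open MeasureTheory.Measure in
theorem stmt14_general {S A : Type*} [MetricSpace S] [MetricSpace A]
    [MeasurableSpace S] [BorelSpace S]
    (As : S → Set A)
    (ν : S × A → Measure S) (hνfin : ∀ p, IsFiniteMeasure (ν p))
    (w : S → ℝ) (hwc : Continuous w) (hw : ∀ x, 0 < w x)
    (hνw : ∀ p : S × A, p.2 ∈ As p.1 → ν p Set.univ ≤ ENNReal.ofReal (w p.1))
    (hcont : ∀ f : BoundedContinuousFunction S ℝ,
      ContinuousOn (fun p : S × A => (∫ y, f y ∂(ν p)) - (ν p Set.univ).toReal * f p.1)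
        {p : S × A | p.2 ∈ As p.1}) :
    (∀ p : S × A, p.2 ∈ As p.1 → IsProbabilityMeasure
        ((ENNReal.ofReal (w p.1))⁻¹ • ν p
          + (1 - ν p Set.univ / ENNReal.ofReal (w p.1)) • Measure.dirac p.1))
    ∧ ∀ f : BoundedContinuousFunction S ℝ,
        ContinuousOn (fun p : S × A =>
            ∫ y, f y ∂((ENNReal.ofReal (w p.1))⁻¹ • ν p
              + (1 - ν p Set.univ / ENNReal.ofReal (w p.1)) • Measure.dirac p.1))
          {p : S × A | p.2 ∈ As p.1} := by
  refine ⟨fun p hp => isProbabilityMeasure_uniformization (hνw p hp) p.1, fun f => ?_⟩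
  have hformula : ContinuousOn
      (fun p : S × A => (w p.1)⁻¹ * ((∫ y, f y ∂(ν p)) - (ν p).real Set.univ * f p.1) + f p.1)
      {p : S × A | p.2 ∈ As p.1} :=
    ((((hwc.comp continuous_fst).inv₀ fun p => (hw p.1).ne').continuousOn.mul (hcont f)).add
      (f.continuous.comp continuous_fst).continuousOn)
  refine hformula.congr fun p hp => ?_
  have := hνfin p
  exact integral_uniformization (hw p.1) (hνw p hp) p.1 (f.integrable (ν p))

/-- Suppose that for every bounded continuous `f : S → ℝ` the map
`(x,a) ↦ ∫_S f dν(x,a) − q_x(a)·f(x)` (with `q_x(a) := ν(x,a)(S)`) is continuous on the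
graph `K = {(x,a) : a ∈ A(x)}`.  Define
`P(x,a) := (1/w(x))·ν(x,a) + (1 − q_x(a)/w(x))·δ_x`.  Then each `P(x,a)`, `(x,a) ∈ K`,
is a Borel probability measure on `S`, and `P` is weakly continuous on `K`. -/
theorem stmt14 {S A : Type*} [MetricSpace S] [MetricSpace A]
    [MeasurableSpace S] [BorelSpace S]
    (As : S → Set A)
    (ν : S × A → Measure S) (hνfin : ∀ p, IsFiniteMeasure (ν p))
    (hν0 : ∀ p : S × A, p.2 ∈ As p.1 → ν p {p.1} = 0)
    (w : S → ℝ) (hwc : Continuous w) (hw : ∀ x, 0 < w x)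
    (hνw : ∀ p : S × A, p.2 ∈ As p.1 → ν p Set.univ ≤ ENNReal.ofReal (w p.1))
    (hcont : ∀ f : BoundedContinuousFunction S ℝ,
      ContinuousOn (fun p : S × A => (∫ y, f y ∂(ν p)) - (ν p Set.univ).toReal * f p.1)
        {p : S × A | p.2 ∈ As p.1}) :
    (∀ p : S × A, p.2 ∈ As p.1 → IsProbabilityMeasure
        ((ENNReal.ofReal (w p.1))⁻¹ • ν p
          + (1 - ν p Set.univ / ENNReal.ofReal (w p.1)) • Measure.dirac p.1))
    ∧ ∀ f : BoundedContinuousFunction S ℝ,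
        ContinuousOn (fun p : S × A =>
            ∫ y, f y ∂((ENNReal.ofReal (w p.1))⁻¹ • ν p
              + (1 - ν p Set.univ / ENNReal.ofReal (w p.1)) • Measure.dirac p.1))
          {p : S × A | p.2 ∈ As p.1} :=
  stmt14_general As ν hνfin w hwc hw hνw hcont
end

section
/- Suppose g ∈ [0, +∞] and a Borel measurable h : S → [0, +∞] satisfy g + h(x)·q_x ≥ c(x) + ∫_S h(y) q(dy|x) for every x ∈ S. Then for every x ∈ S and every t ≥ 0: h(x) + g·t ≥ c(x)·t·e^{−q_x t} + ∫_0^t e^{−q_x s}·( q_x·c(x)·s + ∫_S ( h(y) + g·(t − s) ) q(dy|x) ) ds, where all integrals are Lebesgue integrals with values in [0, +∞] and the convention 0·(+∞) := 0 is in force. -/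
open Filter Topology MeasureTheory ENNReal

/-! When `g` and `h(x)` are finite everything is real. With `Q = q_x` and `I = ∫ h dq_x`, the
hypothesis `c(x) + I ≤ g + h(x)·Q` bounds the integrand by the derivative of
`s ↦ -(h(x) + g·(t - s) + c(x)·s)·e^{-Q s}`, so integrating over `[0, t]` bounds the left side
by `h(x) + g·t - h(x)·e^{-Q t}`. -/

theorem integral_exp_neg_mul_affine (Q C H g t : ℝ) :
    ∫ s in (0 : ℝ)..t, Real.exp (-Q * s) * (g - C + Q * (H + g * (t - s) + C * s))
      = H + g * t - (H + C * t) * Real.exp (-Q * t) := by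
  have hderiv : ∀ s : ℝ, HasDerivAt (fun s => -((H + g * (t - s) + C * s) * Real.exp (-Q * s)))
      (Real.exp (-Q * s) * (g - C + Q * (H + g * (t - s) + C * s))) s := by
    intro s
    have haffine : HasDerivAt (fun s => H + g * (t - s) + C * s) (g * (0 - 1) + C * 1) s :=
      (((hasDerivAt_const s t).sub (hasDerivAt_id s)).const_mul g |>.const_add H).add
        ((hasDerivAt_id s).const_mul C)
    have hexp : HasDerivAt (fun s => Real.exp (-Q * s)) (Real.exp (-Q * s) * (-Q * 1)) s :=
      ((hasDerivAt_id s).const_mul (-Q)).exp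
    exact (haffine.mul hexp).neg.congr_deriv (by ring)
  rw [intervalIntegral.integral_eq_sub_of_hasDerivAt (fun s _ => hderiv s)
    (by apply Continuous.intervalIntegrable; fun_prop)]
  simp only [sub_self, mul_zero, Real.exp_zero, sub_zero]
  ring

theorem mul_exp_add_integral_le {Q C H I g t : ℝ} (hH : 0 ≤ H) (ht : 0 ≤ t)
    (hCI : C + I ≤ g + H * Q) :
    C * t * Real.exp (-Q * t)
        + ∫ s in Set.Ioc 0 t, Real.exp (-Q * s) * (Q * (C * s) + (I + g * (t - s) * Q))
      ≤ H + g * t := by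
  have hpointwise : ∀ s ∈ Set.Icc 0 t,
      Real.exp (-Q * s) * (Q * (C * s) + (I + g * (t - s) * Q))
        ≤ Real.exp (-Q * s) * (g - C + Q * (H + g * (t - s) + C * s)) := fun s _ =>
    mul_le_mul_of_nonneg_left (by linarith) (Real.exp_pos _).le
  have hmono := intervalIntegral.integral_mono_on (μ := volume) ht
    (by apply Continuous.intervalIntegrable; fun_prop)
    (by apply Continuous.intervalIntegrable; fun_prop) hpointwise
  rw [integral_exp_neg_mul_affine, intervalIntegral.integral_of_le ht] at hmono
  nlinarith [mul_nonneg hH (Real.exp_pos (-Q * t)).le]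

theorem ofReal_exp_mul_add_lintegral_eq {α : Type*} [MeasurableSpace α] (μ : Measure α)
    [IsFiniteMeasure μ] (f : α → ℝ≥0∞) (hf : ∫⁻ y, f y ∂μ ≠ ∞) {g : ℝ≥0∞} (hg : g ≠ ∞)
    {C s t : ℝ} (hC : 0 ≤ C) (hs : 0 ≤ s) (hst : s ≤ t) :
    ENNReal.ofReal (Real.exp (-(μ Set.univ).toReal * s))
        * (μ Set.univ * ENNReal.ofReal (C * s) + ∫⁻ y, (f y + g * ENNReal.ofReal (t - s)) ∂μ)
      = ENNReal.ofReal (Real.exp (-(μ Set.univ).toReal * s)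
          * ((μ Set.univ).toReal * (C * s)
            + ((∫⁻ y, f y ∂μ).toReal + g.toReal * (t - s) * (μ Set.univ).toReal))) := by
  have hts : 0 ≤ t - s := sub_nonneg.mpr hst
  rw [lintegral_add_right _ measurable_const, lintegral_const,
    ENNReal.ofReal_mul (Real.exp_pos _).le, ENNReal.ofReal_add (by positivity) (by positivity),
    ENNReal.ofReal_mul (p := (μ Set.univ).toReal) toReal_nonneg,
    ENNReal.ofReal_add (p := (∫⁻ y, f y ∂μ).toReal) toReal_nonneg (by positivity),
    ENNReal.ofReal_mul (p := g.toReal * (t - s)) (by positivity),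
    ENNReal.ofReal_mul (p := g.toReal) toReal_nonneg, ofReal_toReal (measure_ne_top μ _),
    ofReal_toReal hf, ofReal_toReal hg]

theorem add_setLIntegral_exp_neg_mul_le {α : Type*} [MeasurableSpace α] (μ : Measure α)
    [IsFiniteMeasure μ] (f : α → ℝ≥0∞) {C : ℝ} (hC : 0 ≤ C) {g H : ℝ≥0∞}
    (hCf : ENNReal.ofReal C + ∫⁻ y, f y ∂μ ≤ g + H * μ Set.univ) {t : ℝ} (ht : 0 ≤ t) :
    ENNReal.ofReal (C * t * Real.exp (-(μ Set.univ).toReal * t))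
        + ∫⁻ s in Set.Ioc (0 : ℝ) t,
            ENNReal.ofReal (Real.exp (-(μ Set.univ).toReal * s))
              * (μ Set.univ * ENNReal.ofReal (C * s)
                + ∫⁻ y, (f y + g * ENNReal.ofReal (t - s)) ∂μ)
      ≤ H + g * ENNReal.ofReal t := by
  obtain rfl | ht0 := ht.eq_or_lt
  · simp
  by_cases hg : g = ∞
  · simp [hg, ENNReal.top_mul, ht0]
  by_cases hH : H = ∞
  · simp [hH]
  have hμ : μ Set.univ ≠ ∞ := measure_ne_top _ _
  have hRHS : g + H * μ Set.univ ≠ ∞ := by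
    simp [ENNReal.add_eq_top, ENNReal.mul_eq_top, hg, hH, hμ]
  have hf : ∫⁻ y, f y ∂μ ≠ ∞ := ne_top_of_le_ne_top hRHS (le_add_self.trans hCf)
  have hCf_real : C + (∫⁻ y, f y ∂μ).toReal ≤ g.toReal + H.toReal * (μ Set.univ).toReal := by
    have := ENNReal.toReal_mono hRHS hCf
    rwa [ENNReal.toReal_add ofReal_ne_top hf, ENNReal.toReal_add hg (mul_ne_top hH hμ),
      ENNReal.toReal_mul, ENNReal.toReal_ofReal hC] at this
  have hnonneg : ∀ᵐ s ∂(volume.restrict (Set.Ioc 0 t)),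
      0 ≤ Real.exp (-(μ Set.univ).toReal * s) * ((μ Set.univ).toReal * (C * s)
        + ((∫⁻ y, f y ∂μ).toReal + g.toReal * (t - s) * (μ Set.univ).toReal)) := by
    filter_upwards [ae_restrict_mem measurableSet_Ioc] with s ⟨hs, hst⟩
    have := sub_nonneg.mpr hst
    positivity
  rw [setLIntegral_congr_fun measurableSet_Ioc
      fun s hs => ofReal_exp_mul_add_lintegral_eq μ f hf hg hC hs.1.le hs.2,
    ← ofReal_integral_eq_lintegral_ofReal (Continuous.integrableOn_Ioc (by fun_prop)) hnonneg,
    ← ENNReal.ofReal_add (by positivity) (integral_nonneg_of_ae hnonneg)]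
  calc _ ≤ ENNReal.ofReal (H.toReal + g.toReal * t) :=
        ENNReal.ofReal_le_ofReal (mul_exp_add_integral_le toReal_nonneg ht hCf_real)
    _ = H + g * ENNReal.ofReal t := by
      rw [ENNReal.ofReal_add toReal_nonneg (by positivity), ENNReal.ofReal_mul toReal_nonneg,
        ofReal_toReal hH, ofReal_toReal hg]

theorem stmt18_general {S : Type*} [MeasurableSpace S]
    (c : S → ℝ) (hc0 : ∀ x, 0 ≤ c x)
    (q : S → Measure S) (hqfin : ∀ x, IsFiniteMeasure (q x))
    (g : ℝ≥0∞) (h : S → ℝ≥0∞)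
    (hineq : ∀ x : S,
      ENNReal.ofReal (c x) + ∫⁻ y, h y ∂(q x) ≤ g + h x * q x Set.univ) :
    ∀ (x : S) (t : ℝ), 0 ≤ t →
      ENNReal.ofReal (c x * t * Real.exp (-(q x Set.univ).toReal * t))
        + ∫⁻ s in Set.Ioc (0 : ℝ) t,
            ENNReal.ofReal (Real.exp (-(q x Set.univ).toReal * s))
              * (q x Set.univ * ENNReal.ofReal (c x * s)
                + ∫⁻ y, (h y + g * ENNReal.ofReal (t - s)) ∂(q x))
        ≤ h x + g * ENNReal.ofReal t := fun x _ ht =>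
  have := hqfin x
  add_setLIntegral_exp_neg_mul_le (q x) h (hc0 x) (hineq x) ht

/-- If `g ∈ [0,+∞]` and a Borel measurable `h : S → [0,+∞]` satisfy
`g + h(x)·q_x ≥ c(x) + ∫_S h(y) q(dy|x)` for every `x ∈ S` (with `q_x := q(S|x)`), then
for every `x ∈ S` and `t ≥ 0`:
`h(x) + g·t ≥ c(x)·t·e^{−q_x t}
  + ∫_0^t e^{−q_x s} ( q_x·c(x)·s + ∫_S (h(y) + g·(t−s)) q(dy|x) ) ds`. -/
theorem stmt18 {S : Type*} [MetricSpace S] [MeasurableSpace S] [BorelSpace S]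
    (c : S → ℝ) (hcm : Measurable c) (hc0 : ∀ x, 0 ≤ c x)
    (q : S → Measure S) (hqfin : ∀ x, IsFiniteMeasure (q x))
    (hqdiag : ∀ x, q x {x} = 0)
    (hqmeas : ∀ Γ : Set S, MeasurableSet Γ → Measurable fun x => q x Γ)
    (g : ℝ≥0∞) (h : S → ℝ≥0∞) (hh : Measurable h)
    (hineq : ∀ x : S,
      ENNReal.ofReal (c x) + ∫⁻ y, h y ∂(q x) ≤ g + h x * q x Set.univ) :
    ∀ (x : S) (t : ℝ), 0 ≤ t →
      ENNReal.ofReal (c x * t * Real.exp (-(q x Set.univ).toReal * t))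
        + ∫⁻ s in Set.Ioc (0 : ℝ) t,
            ENNReal.ofReal (Real.exp (-(q x Set.univ).toReal * s))
              * (q x Set.univ * ENNReal.ofReal (c x * s)
                + ∫⁻ y, (h y + g * ENNReal.ofReal (t - s)) ∂(q x))
        ≤ h x + g * ENNReal.ofReal t :=
  stmt18_general c hc0 q hqfin g h hineq
end
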